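/- arXiv:1705.00605 — 4 statements merged into one kernel-verified Lean document; each statement's English description precedes it below -/
import Mathlib

section
/- Let a, c, d ∈ ℂ and b, e ∈ ℝ. Suppose that for all λ ∈ ℂ, F(λ) := 2·Re(|λ|²·λ·a) + 4·|λ|²·b + 2·Re(λ²·c) + 2·Re(λ·d) + e ≤ 0. Then a = 0. -/
open Filter Topology ComplexConjugate

theorem nonpos_of_cubic_nonpos {A B C D : ℝ}
    (h : ∀ t : ℝ, 0 ≤ t → A * t ^ 3 + B * t ^ 2 + C * t + D ≤ 0) : A ≤ 0 := by
  -- `A + B u + C u² + D u³` at `u = t⁻¹` is the cubic divided by `t³`.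
  set g : ℝ → ℝ := fun u => A + B * u + C * u ^ 2 + D * u ^ 3
  have hg : Tendsto (fun t : ℝ => g t⁻¹) atTop (𝓝 A) := by
    have hg0 : Tendsto g (𝓝 0) (𝓝 A) := by
      simpa [g] using (by fun_prop : Continuous g).tendsto 0
    exact hg0.comp tendsto_inv_atTop_zero
  refine le_of_tendsto hg ?_
  filter_upwards [eventually_gt_atTop 0] with t ht
  have hscaled : g t⁻¹ = (A * t ^ 3 + B * t ^ 2 + C * t + D) * t⁻¹ ^ 3 := by
    simp only [g]
    field_simp
  rw [hscaled]
  exact mul_nonpos_of_nonpos_of_nonneg (h t ht.le) (by positivity)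

theorem re_ofReal_mul_pow_mul (t : ℝ) (w z : ℂ) (k : ℕ) :
    (((t : ℂ) * w) ^ k * z).re = t ^ k * (w ^ k * z).re := by
  rw [mul_pow, mul_assoc, ← Complex.ofReal_pow, Complex.re_ofReal_mul]

theorem norm_ofReal_mul_conj {t : ℝ} (ht : 0 ≤ t) (a : ℂ) : ‖(t : ℂ) * conj a‖ = t * ‖a‖ := by
  rw [norm_mul, Complex.norm_conj, Complex.norm_real, Real.norm_of_nonneg ht]

theorem re_ofReal_sq_mul_ofReal_mul_conj_mul (t : ℝ) (a : ℂ) :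
    ((((t * ‖a‖ : ℝ) : ℂ) ^ 2) * ((t : ℂ) * conj a) * a).re = ‖a‖ ^ 4 * t ^ 3 := by
  have hconj : conj a * a = (‖a‖ : ℂ) ^ 2 := Complex.conj_mul' a
  have : (((t * ‖a‖ : ℝ) : ℂ) ^ 2) * ((t : ℂ) * conj a) * a = ((‖a‖ ^ 4 * t ^ 3 : ℝ) : ℂ) := by
    rw [mul_assoc, mul_assoc, hconj]
    push_cast
    ring
  rw [this, Complex.ofReal_re]

/-- Leading-coefficient extraction: if
`F(l) = 2·Re(|l|²·l·a) + 4·|l|²·b + 2·Re(l²·c) + 2·Re(l·d) + e ≤ 0` for all `l ∈ ℂ`,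
then `a = 0`. -/
theorem cubic_coeff_vanishes (a c d : ℂ) (b e : ℝ)
    (h : ∀ l : ℂ,
      2 * (((‖l‖ : ℂ) ^ 2) * l * a).re + 4 * (‖l‖) ^ 2 * b
        + 2 * (l ^ 2 * c).re + 2 * (l * d).re + e ≤ 0) :
    a = 0 := by
  by_contra ha
  have hlead : 0 < 2 * ‖a‖ ^ 4 := by positivity
  -- Along the ray `l = t · conj a` the cubic term is `2‖a‖⁴t³`.
  refine hlead.not_ge (nonpos_of_cubic_nonpos (B := 4 * ‖a‖ ^ 2 * b + 2 * (conj a ^ 2 * c).re)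
    (C := 2 * (conj a * d).re) (D := e) fun t ht => ?_)
  have hlin : ((t : ℂ) * conj a * d).re = t * (conj a * d).re := by
    simpa using re_ofReal_mul_pow_mul t (conj a) d 1
  have hl := h (t * conj a)
  rw [norm_ofReal_mul_conj ht, re_ofReal_sq_mul_ofReal_mul_conj_mul, re_ofReal_mul_pow_mul,
    hlin] at hl
  linear_combination hl
end

section
/- Let a, c, d ∈ ℂ and b, e ∈ ℝ. Suppose that for all λ ∈ ℂ, 2·Re(|λ|²·λ·a) + 4·|λ|²·b + 2·Re(λ²·c) + 2·Re(λ·d) + e ≤ 0. Then 2b + |c| ≤ 0; in particular b ≤ 0. -/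
/-!
Replacing `l` by `-l` flips the sign of the odd terms `Re(|l|² l a)` and `Re(l d)`, so adding
`F(l) ≤ 0` and `F(-l) ≤ 0` gives `8|l|² b + 4 Re(l² c) + 2e ≤ 0`. Along the real line through a
unit `u` with `u² c = |c|` this reads `t² (8b + 4|c|) + 2e ≤ 0` for all real `t`, which forces
the leading coefficient to be nonpositive.
-/

open ComplexConjugate

theorem Complex.exists_norm_eq_one_sq_mul_eq_norm (c : ℂ) :
    ∃ u : ℂ, ‖u‖ = 1 ∧ u ^ 2 * c = ‖c‖ := by
  obtain ⟨w, rfl⟩ := IsAlgClosed.exists_pow_nat_eq c two_pos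
  rcases eq_or_ne w 0 with rfl | hw
  · exact ⟨1, by simp, by simp⟩
  · have hw' : (‖w‖ : ℂ) ≠ 0 := by simpa using hw
    refine ⟨conj w / ‖w‖, by simp [hw], ?_⟩
    rw [div_pow, div_mul_eq_mul_div, ← mul_pow, Complex.conj_mul', norm_pow]
    push_cast
    field_simp

lemma nonpos_of_forall_sq_mul_add_nonpos {s k : ℝ} (h : ∀ t : ℝ, t ^ 2 * s + k ≤ 0) :
    s ≤ 0 := by
  by_contra! hs
  have := h (Real.sqrt ((|k| + 1) / s))
  rw [Real.sq_sqrt (by positivity), div_mul_cancel₀ _ hs.ne'] at this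
  linarith [neg_abs_le k]

noncomputable def curvaturePoly (a c d : ℂ) (b e : ℝ) (l : ℂ) : ℝ :=
  2 * (((‖l‖ : ℂ) ^ 2) * l * a).re + 4 * ‖l‖ ^ 2 * b + 2 * (l ^ 2 * c).re + 2 * (l * d).re + e

lemma curvaturePoly_add_neg (a c d : ℂ) (b e : ℝ) (l : ℂ) :
    curvaturePoly a c d b e l + curvaturePoly a c d b e (-l) =
      8 * ‖l‖ ^ 2 * b + 4 * (l ^ 2 * c).re + 2 * e := by
  simp only [curvaturePoly, norm_neg, neg_sq, neg_mul, mul_neg, Complex.neg_re]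
  ring

lemma curvaturePoly_even_part_nonpos {a c d : ℂ} {b e : ℝ}
    (h : ∀ l, curvaturePoly a c d b e l ≤ 0) (l : ℂ) :
    8 * ‖l‖ ^ 2 * b + 4 * (l ^ 2 * c).re + 2 * e ≤ 0 :=
  curvaturePoly_add_neg a c d b e l ▸ add_nonpos (h l) (h (-l))

/-- Quadratic-term constraint: if
`2·Re(|l|²·l·a) + 4·|l|²·b + 2·Re(l²·c) + 2·Re(l·d) + e ≤ 0` for all `l ∈ ℂ`,
then `2b + |c| ≤ 0`; in particular `b ≤ 0`. -/
theorem quadratic_coeff_constraint (a c d : ℂ) (b e : ℝ)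
    (h : ∀ l : ℂ,
      2 * (((‖l‖ : ℂ) ^ 2) * l * a).re + 4 * (‖l‖) ^ 2 * b
        + 2 * (l ^ 2 * c).re + 2 * (l * d).re + e ≤ 0) :
    2 * b + ‖c‖ ≤ 0 ∧ b ≤ 0 := by
  obtain ⟨u, hu, huc⟩ := Complex.exists_norm_eq_one_sq_mul_eq_norm c
  have h_even (t : ℝ) : t ^ 2 * (8 * b + 4 * ‖c‖) + 2 * e ≤ 0 := by
    have hnorm : ‖(t : ℂ) * u‖ ^ 2 = t ^ 2 := by
      rw [norm_mul, hu, mul_one, Complex.norm_real, Real.norm_eq_abs, sq_abs]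
    have hre : (((t : ℂ) * u) ^ 2 * c).re = t ^ 2 * ‖c‖ := by
      rw [mul_pow, mul_assoc, huc]
      norm_cast
    have := curvaturePoly_even_part_nonpos h (t * u)
    rw [hnorm, hre] at this
    linarith
  have hcoeff := nonpos_of_forall_sq_mul_add_nonpos h_even
  constructor <;> linarith [norm_nonneg c]
end

section
/- Let V be a finite-dimensional complex inner product space and let R : V × V × V × V → ℂ be a map that is ℂ-linear in the first and third arguments, conjugate-linear in the second and fourth, and satisfies the Kähler curvature symmetries R(x,ȳ,z,w̄) = R(z,ȳ,x,w̄) = conj(R(y,x̄,w,z̄)). Suppose R(u,ū,u,ū) ≤ 0 (i.e., is real and nonpositive) for all u ∈ V, and let v ∈ V satisfy R(v,v̄,v,v̄) = 0. Then R(v,v̄,w,w̄) ≤ 0 for all w ∈ V. -/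
open scoped ComplexConjugate InnerProductSpace

/-- Part (1) of Lemma 2.1: for a Kähler-type curvature tensor with semi-negative
holomorphic sectional curvature, if `H(v) = 0` then `R(v,v̄,w,w̄) ≤ 0` for all `w`. -/
theorem key_lemma_part_one
    {V : Type*} [NormedAddCommGroup V] [InnerProductSpace ℂ V] [FiniteDimensional ℂ V]
    (R : V → V → V → V → ℂ)
    (hlin₁ : ∀ y z w, IsLinearMap ℂ (fun x => R x y z w))
    (hlin₃ : ∀ x y w, IsLinearMap ℂ (fun z => R x y z w))
    (hconj₂ : ∀ x z w (a : ℂ) y y', R x (a • y + y') z w = conj a * R x y z w + R x y' z w)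
    (hconj₄ : ∀ x y z (a : ℂ) w w', R x y z (a • w + w') = conj a * R x y z w + R x y z w')
    (hsym₁₃ : ∀ x y z w, R x y z w = R z y x w)
    (hconjsym : ∀ x y z w, R x y z w = conj (R y x w z))
    (hH : ∀ u : V, (R u u u u).re ≤ 0 ∧ (R u u u u).im = 0)
    (v : V) (hv : R v v v v = 0) :
    ∀ w : V, (R v v w w).re ≤ 0 ∧ (R v v w w).im = 0 := by
  -- linearity in each slot
  have add1 : ∀ x x' y z w, R (x + x') y z w = R x y z w + R x' y z w :=
    fun x x' y z w => (hlin₁ y z w).map_add x x'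
  have smul1 : ∀ (a : ℂ) x y z w, R (a • x) y z w = a * R x y z w :=
    fun a x y z w => by simpa [smul_eq_mul] using (hlin₁ y z w).map_smul a x
  have add3 : ∀ x y z z' w, R x y (z + z') w = R x y z w + R x y z' w :=
    fun x y z z' w => (hlin₃ x y w).map_add z z'
  have smul3 : ∀ (a : ℂ) x y z w, R x y (a • z) w = a * R x y z w :=
    fun a x y z w => by simpa [smul_eq_mul] using (hlin₃ x y w).map_smul a z
  have add2 : ∀ x y y' z w, R x (y + y') z w = R x y z w + R x y' z w :=
    fun x y y' z w => by simpa using hconj₂ x z w 1 y y'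
  have zero2 : ∀ x z w, R x 0 z w = 0 := by
    intro x z w
    have h := add2 x 0 0 z w
    rw [add_zero] at h
    exact (left_eq_add.mp h)
  have smul2 : ∀ (a : ℂ) x y z w, R x (a • y) z w = conj a * R x y z w :=
    fun a x y z w => by simpa [zero2] using hconj₂ x z w a y 0
  have add4 : ∀ x y z w w', R x y z (w + w') = R x y z w + R x y z w' :=
    fun x y z w w' => by simpa using hconj₄ x y z 1 w w'
  have zero4 : ∀ x y z, R x y z 0 = 0 := by
    intro x y z
    have h := add4 x y z 0 0
    rw [add_zero] at h
    exact (left_eq_add.mp h)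
  have smul4 : ∀ (a : ℂ) x y z w, R x y z (a • w) = conj a * R x y z w :=
    fun a x y z w => by simpa [zero4] using hconj₄ x y z a w 0
  -- expansion of the quartic
  have expand : ∀ (u : V) (t : ℝ),
      R (v + (t:ℂ) • u) (v + (t:ℂ) • u) (v + (t:ℂ) • u) (v + (t:ℂ) • u)
      = R v v v v
        + (t:ℂ) * (R u v v v + R v u v v + R v v u v + R v v v u)
        + (t:ℂ)^2 * (R u u v v + R u v u v + R u v v u + R v u u v + R v u v u + R v v u u)
        + (t:ℂ)^3 * (R u u u v + R u u v u + R u v u u + R v u u u)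
        + (t:ℂ)^4 * R u u u u := by
    intro u t
    simp only [add1, add2, add3, add4, smul1, smul2, smul3, smul4, Complex.conj_ofReal]
    ring
  -- key quadratic coefficient inequality
  have key : ∀ u : V, 4 * (R v v u u).re + 2 * (R u v u v).re ≤ 0 := by
    intro u
    have e1 : (R u u v v).re = (R v v u u).re := by
      have h : R u u v v = conj (R v v u u) := by
        rw [hsym₁₃ u u v v, hconjsym v u u v, hsym₁₃ u v v u]
      rw [h, Complex.conj_re]
    have e2 : (R u v v u).re = (R v v u u).re := by
      rw [hsym₁₃ u v v u]
    have e3 : (R v u u v).re = (R v v u u).re := by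
      have h : R v u u v = conj (R v v u u) := by
        rw [hconjsym v u u v, hsym₁₃ u v v u]
      rw [h, Complex.conj_re]
    have e4 : (R v u v u).re = (R u v u v).re := by
      rw [hconjsym v u v u, Complex.conj_re]
    have q : ∀ t : ℝ,
        t^2 * (4 * (R v v u u).re + 2 * (R u v u v).re) + t^4 * (R u u u u).re ≤ 0 := by
      intro t
      have h1 := (hH (v + (t:ℂ) • u)).1
      have h2 := (hH (v + ((-t : ℝ):ℂ) • u)).1
      rw [expand u t] at h1
      rw [expand u (-t)] at h2
      rw [hv] at h1 h2
      simp only [Complex.add_re, Complex.zero_re, zero_add, ← Complex.ofReal_pow,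
        Complex.re_ofReal_mul] at h1 h2
      rw [e1, e2, e3, e4] at h1 h2
      ring_nf at h1 h2
      nlinarith [h1, h2]
    have c4 : (R u u u u).re ≤ 0 := (hH u).1
    by_contra hcon
    push_neg at hcon
    set A := 4 * (R v v u u).re + 2 * (R u v u v).re with hA
    set C := -(R u u u u).re with hC
    have hC0 : 0 ≤ C := by linarith
    have hs : ∀ s : ℝ, 0 < s → A ≤ C * s := by
      intro s hspos
      have ht2 : (Real.sqrt s)^2 = s := Real.sq_sqrt hspos.le
      have hq := q (Real.sqrt s)
      have ht4 : (Real.sqrt s)^4 = s^2 := by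
        rw [show (4 : ℕ) = 2 * 2 from rfl, pow_mul, ht2]
      rw [ht2, ht4] at hq
      nlinarith [hq, hspos, sq_nonneg s]
    have h := hs (A / (2 * C + 1)) (by positivity)
    have h2 : A * (2 * C + 1) ≤ C * A := by
      have hpos : (0:ℝ) < 2 * C + 1 := by linarith
      calc A * (2 * C + 1) ≤ (C * (A / (2 * C + 1))) * (2 * C + 1) := by
            exact mul_le_mul_of_nonneg_right h hpos.le
        _ = C * A := by field_simp
    nlinarith [h2, hC0, hcon]
  intro w
  have im0 : (R v v w w).im = 0 := by
    have h := hconjsym v v w w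
    have h2 := congrArg Complex.im h
    simp only [Complex.conj_im] at h2
    linarith
  have k1 := key w
  have k2 := key (Complex.I • w)
  have r1 : R v v (Complex.I • w) (Complex.I • w) = R v v w w := by
    rw [smul3, smul4, Complex.conj_I]
    ring_nf
    rw [Complex.I_sq]
    ring
  have r2 : R (Complex.I • w) v (Complex.I • w) v = - R w v w v := by
    rw [smul1, smul3]
    ring_nf
    rw [Complex.I_sq]
    ring
  rw [r1, r2] at k2
  simp only [Complex.neg_re] at k2
  constructor
  · linarith
  · exact im0
end

section
/- Let V be a finite-dimensional complex inner product space and let R : V × V × V × V → ℂ be ℂ-linear in the first and third arguments, conjugate-linear in the second and fourth, with the Kähler curvature symmetries R(x,ȳ,z,w̄) = R(z,ȳ,x,w̄) = conj(R(y,x̄,w,z̄)). Suppose R(u,ū,u,ū) ≤ 0 for all u ∈ V, and let v ∈ V satisfy R(v,v̄,w,w̄) = 0 for all w ∈ V. Then R(v,x̄,y,z̄) = 0 for all x, y, z ∈ V. -/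
open scoped ComplexConjugate InnerProductSpace

lemma quad_nonpos_aux (a b c : ℝ) (h : ∀ t : ℝ, a*t^2 + b*t^3 + c*t^4 ≤ 0) : a ≤ 0 := by
  by_contra hpos
  push_neg at hpos
  set t : ℝ := min 1 (a / (|b| + |c| + 1)) with ht
  have hbc : 0 < |b| + |c| + 1 := by positivity
  have ht0 : 0 < t := lt_min one_pos (div_pos hpos hbc)
  have ht1 : t ≤ 1 := min_le_left _ _
  have ht2 : t * (|b| + |c| + 1) ≤ a := by
    rw [← le_div_iff₀ hbc]; exact min_le_right _ _
  have h3 : 0 < t^3 := by positivity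
  have h43 : t^4 ≤ t^3 := pow_le_pow_of_le_one ht0.le ht1 (by norm_num)
  have e1 : b * t^3 ≥ -|b| * t^3 := by nlinarith [neg_abs_le b]
  have e2 : c * t^4 ≥ -|c| * t^3 := by
    nlinarith [mul_nonneg (abs_nonneg c) (sub_nonneg.2 h43),
      mul_nonneg (sub_nonneg.2 (neg_abs_le c)) (by positivity : (0:ℝ) ≤ t^4)]
  have e3 : a * t^2 ≥ (|b| + |c| + 1) * t^3 := by nlinarith [sq_nonneg t]
  have := h t
  nlinarith

lemma cubic_nonpos_aux (b c : ℝ) (h : ∀ t : ℝ, b*t^3 + c*t^4 ≤ 0) : b ≤ 0 := by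
  by_contra hpos
  push_neg at hpos
  set t : ℝ := min 1 (b / (|c| + 1)) with ht
  have hbc : 0 < |c| + 1 := by positivity
  have ht0 : 0 < t := lt_min one_pos (div_pos hpos hbc)
  have ht1 : t ≤ 1 := min_le_left _ _
  have ht2 : t * (|c| + 1) ≤ b := by
    rw [← le_div_iff₀ hbc]; exact min_le_right _ _
  have h3 : 0 < t^3 := by positivity
  have h43 : t^4 ≤ t^3 := pow_le_pow_of_le_one ht0.le ht1 (by norm_num)
  have e2 : c * t^4 ≥ -|c| * t^4 := by
    nlinarith [mul_nonneg (sub_nonneg.2 (neg_abs_le c)) (by positivity : (0:ℝ) ≤ t^4)]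
  have e3 : b * t^3 ≥ (|c| + 1) * t^4 := by nlinarith [sq_nonneg t]
  have := h t
  nlinarith [mul_pos h3 ht0]

lemma cubic_zero_aux (b c : ℝ) (h : ∀ t : ℝ, b*t^3 + c*t^4 ≤ 0) : b = 0 := by
  have h1 : b ≤ 0 := cubic_nonpos_aux b c h
  have h2 : -b ≤ 0 := cubic_nonpos_aux (-b) c (fun t => by have := h (-t); nlinarith)
  linarith

/-- Part (2) of Lemma 2.1: for a Kähler-type curvature tensor with semi-negative
holomorphic sectional curvature, if `R(v,v̄,w,w̄) = 0` for all `w`, then `v` lies in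
the kernel of the curvature: `R(v,x̄,y,z̄) = 0` for all `x, y, z`. -/
theorem key_lemma_part_two
    {V : Type*} [NormedAddCommGroup V] [InnerProductSpace ℂ V] [FiniteDimensional ℂ V]
    (R : V → V → V → V → ℂ)
    (hlin₁ : ∀ y z w, IsLinearMap ℂ (fun x => R x y z w))
    (hlin₃ : ∀ x y w, IsLinearMap ℂ (fun z => R x y z w))
    (hconj₂ : ∀ x z w (a : ℂ) y y', R x (a • y + y') z w = conj a * R x y z w + R x y' z w)
    (hconj₄ : ∀ x y z (a : ℂ) w w', R x y z (a • w + w') = conj a * R x y z w + R x y z w')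
    (hsym₁₃ : ∀ x y z w, R x y z w = R z y x w)
    (hconjsym : ∀ x y z w, R x y z w = conj (R y x w z))
    (hH : ∀ u : V, (R u u u u).re ≤ 0 ∧ (R u u u u).im = 0)
    (v : V) (hv : ∀ w : V, R v v w w = 0) :
    ∀ x y z : V, R v x y z = 0 := by
  -- basic multilinearity lemmas
  have radd1 : ∀ x x' y z w, R (x + x') y z w = R x y z w + R x' y z w :=
    fun x x' y z w => (hlin₁ y z w).map_add x x'
  have rsmul1 : ∀ (a : ℂ) x y z w, R (a • x) y z w = a * R x y z w :=
    fun a x y z w => by simpa [smul_eq_mul] using (hlin₁ y z w).map_smul a x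
  have radd3 : ∀ x y z z' w, R x y (z + z') w = R x y z w + R x y z' w :=
    fun x y z z' w => (hlin₃ x y w).map_add z z'
  have rsmul3 : ∀ (a : ℂ) x y z w, R x y (a • z) w = a * R x y z w :=
    fun a x y z w => by simpa [smul_eq_mul] using (hlin₃ x y w).map_smul a z
  have rzero2 : ∀ x z w, R x 0 z w = 0 := by
    intro x z w
    have := hconj₂ x z w 1 0 0
    simpa using this.symm
  have radd2 : ∀ x y y' z w, R x (y + y') z w = R x y z w + R x y' z w := by
    intro x y y' z w
    have := hconj₂ x z w 1 y y'
    simpa using this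
  have rsmul2 : ∀ (a : ℂ) x y z w, R x (a • y) z w = conj a * R x y z w := by
    intro a x y z w
    have := hconj₂ x z w a y 0
    simpa [rzero2] using this
  have rzero4 : ∀ x y z, R x y z 0 = 0 := by
    intro x y z
    have := hconj₄ x y z 1 0 0
    simpa using this.symm
  have radd4 : ∀ x y z w w', R x y z (w + w') = R x y z w + R x y z w' := by
    intro x y z w w'
    have := hconj₄ x y z 1 w w'
    simpa using this
  have rsmul4 : ∀ (a : ℂ) x y z w, R x y z (a • w) = conj a * R x y z w := by
    intro a x y z w
    have := hconj₄ x y z a w 0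
    simpa [rzero4] using this
  -- Stage 1: R v v̄ ⬝ ⬝ vanishes
  have h1 : ∀ w w', R v v w w' = 0 := by
    intro w w'
    have e1 := hv (w + w')
    have e2 := hv (w + Complex.I • w')
    simp only [radd3, radd4, rsmul3, rsmul4, hv, Complex.conj_I] at e1 e2
    linear_combination (1/2 : ℂ) * e1 + (Complex.I/2) * e2 +
      ((R v v w w' - R v v w' w)/2) * Complex.I_sq
  have h3 : ∀ a b, R v a b v = 0 := fun a b => by
    rw [hconjsym v a b v, (hsym₁₃ a v v b).trans (h1 a b), map_zero]
  -- zero lemmas for terms with at least two v's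
  have z1 : ∀ u : V, R u v v v = 0 := fun u => (hsym₁₃ u v v v).trans (h1 u v)
  have z2 : ∀ u : V, R v u v v = 0 := fun u => by rw [hconjsym v u v v, z1, map_zero]
  have z5 : ∀ u : V, R u u v v = 0 := fun u => (hsym₁₃ u u v v).trans (h3 u u)
  have z6 : ∀ u : V, R u v v u = 0 := fun u => (hsym₁₃ u v v u).trans (h1 u u)
  -- conjugation rewrites
  have w1 : ∀ u : V, R v u v u = conj (R u v u v) := fun u => hconjsym v u v u
  have w2 : ∀ u : V, R u u v u = conj (R u u u v) := fun u => hconjsym u u v u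
  have w3 : ∀ u : V, R v u u u = conj (R u u u v) := fun u => (hsym₁₃ v u u u).trans (w2 u)
  have w4 : ∀ u : V, R u v u u = R u u u v := fun u => by
    rw [hconjsym u v u u, w3, Complex.conj_conj]
  -- main expansion of the holomorphic sectional curvature along v + c•u
  have expand : ∀ (c : ℂ) (u : V),
      R (v + c • u) (v + c • u) (v + c • u) (v + c • u) =
      R v v v v
      + c * R u v v v + conj c * R v u v v + c * R v v u v + conj c * R v v v u
      + (c * conj c) * R u u v v + c^2 * R u v u v + (c * conj c) * R u v v u
      + (c * conj c) * R v u u v + (conj c)^2 * R v u v u + (c * conj c) * R v v u u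
      + c^2 * conj c * R u u u v + c * (conj c)^2 * R u u v u
      + c^2 * conj c * R u v u u + c * (conj c)^2 * R v u u u
      + (c * conj c)^2 * R u u u u := by
    intro c u
    simp only [radd1, radd2, radd3, radd4, rsmul1, rsmul2, rsmul3, rsmul4]
    ring
  -- Stage 2: second-order vanishing R(u,v̄,u,v̄) = 0
  have stage2 : ∀ (u : V) (t : ℝ),
      (2*(R u v u v).re) * t^2 + (4*(R u u u v).re) * t^3 + (R u u u u).re * t^4 ≤ 0 := by
    intro u t
    have h0 := (hH (v + (t:ℂ) • u)).1
    rw [expand] at h0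
    rw [hv, h1, h1, z1, z2, z5, z6, h3, h1, w1, w2, w3, w4] at h0
    simp only [Complex.conj_ofReal, ← Complex.ofReal_pow, ← Complex.ofReal_mul,
      Complex.add_re, Complex.mul_re,
      Complex.ofReal_re, Complex.ofReal_im, Complex.conj_re, Complex.conj_im,
      mul_zero, zero_mul, zero_add, add_zero, zero_sub, sub_zero, mul_neg, neg_neg,
      neg_zero] at h0
    ring_nf at h0 ⊢
    linarith
  have hBre : ∀ u : V, (R u v u v).re ≤ 0 := by
    intro u
    have := quad_nonpos_aux _ _ _ (stage2 u)
    linarith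
  have hBre0 : ∀ u : V, (R u v u v).re = 0 := by
    intro u
    have hiu := hBre (Complex.I • u)
    rw [rsmul1, rsmul3] at hiu
    have : (Complex.I * (Complex.I * R u v u v)) = - R u v u v := by
      rw [← mul_assoc, Complex.I_mul_I]; ring
    rw [this, Complex.neg_re] at hiu
    have := hBre u
    linarith
  have hB : ∀ u : V, R u v u v = 0 := by
    intro u
    have him := hBre0 ((1 + Complex.I) • u)
    rw [rsmul1, rsmul3] at him
    have : ((1 + Complex.I) * ((1 + Complex.I) * R u v u v)) =
        Complex.I * R u v u v + Complex.I * R u v u v := by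
      linear_combination (R u v u v) * Complex.I_sq
    rw [this] at him
    simp only [Complex.add_re, Complex.mul_re, Complex.I_re, Complex.I_im] at him
    have hre := hBre0 u
    apply Complex.ext
    · exact hre
    · simpa [hre] using him
  -- polarized version of stage 2
  have hS : ∀ x z : V, R x v z v = 0 := by
    intro x z
    have e := hB (x + z)
    rw [radd1, radd3, radd3, hB, hB] at e
    rw [hsym₁₃ z v x v] at e
    have h2 : (2:ℂ) * R x v z v = 0 := by linear_combination e
    exact (mul_eq_zero.mp h2).resolve_left two_ne_zero
  have hS' : ∀ x z : V, R v x v z = 0 := fun x z => by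
    rw [hconjsym v x v z, hS, map_zero]
  -- Stage 3: third-order vanishing R(u,ū,u,v̄) = 0
  have stage3 : ∀ (u : V) (t : ℝ),
      (4*(R u u u v).re) * t^3 + (R u u u u).re * t^4 ≤ 0 := by
    intro u t
    have := stage2 u t
    rw [hS u u] at this
    simpa using this
  have hTre : ∀ u : V, (R u u u v).re = 0 := by
    intro u
    have h4 := cubic_zero_aux (4*(R u u u v).re) ((R u u u u).re) (stage3 u)
    linarith
  have hT : ∀ u : V, R u u u v = 0 := by
    intro u
    have him := hTre (Complex.I • u)
    rw [rsmul1, rsmul2, rsmul3, Complex.conj_I] at him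
    have : (Complex.I * (-Complex.I * (Complex.I * R u u u v))) =
        Complex.I * R u u u v := by
      linear_combination (-Complex.I * R u u u v) * Complex.I_sq
    rw [this, Complex.mul_re, Complex.I_re, Complex.I_im] at him
    apply Complex.ext
    · exact hTre u
    · simpa using him
  -- Stage 4: polarization of the cubic form
  have expand3 : ∀ (a : ℂ) (u w : V),
      R (u + a • w) (u + a • w) (u + a • w) v =
      R u u u v + a * R w u u v + conj a * R u w u v + a * R u u w v
      + (a * conj a) * R w w u v + a^2 * R w u w v + (a * conj a) * R u w w v
      + (a^2 * conj a) * R w w w v := by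
    intro a u w
    simp only [radd1, radd2, radd3, rsmul1, rsmul2, rsmul3]
    ring
  have hq : ∀ u w : V, R u w u v = 0 := by
    intro u w
    have e1 := hT (u + (1:ℂ) • w)
    have e2 := hT (u + (-1:ℂ) • w)
    have e3 := hT (u + Complex.I • w)
    have e4 := hT (u + (-Complex.I) • w)
    rw [expand3] at e1 e2 e3 e4
    rw [hT u, hT w] at e1 e2 e3 e4
    simp only [map_one, map_neg, Complex.conj_I] at e1 e2 e3 e4
    linear_combination (1/4 : ℂ) * e1 - (1/4 : ℂ) * e2 + (Complex.I/4) * e3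
      - (Complex.I/4) * e4 + ((R u w u v - R w u u v - R u u w v)/2) * Complex.I_sq
  have hG : ∀ x y z : V, R x y z v = 0 := by
    intro x y z
    have e := hq (x + z) y
    rw [radd1, radd3, radd3, hq, hq] at e
    rw [hsym₁₃ z y x v] at e
    have h2 : (2:ℂ) * R x y z v = 0 := by linear_combination e
    exact (mul_eq_zero.mp h2).resolve_left two_ne_zero
  intro x y z
  rw [hsym₁₃ v x y z, hconjsym y x v z, hG, map_zero]
end
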